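/- Fix M > 1, T₀ ∈ (0,1), m ≥ 1, and let φ(t) = (2/(m+2))t^((m+2)/2). Then there exists δ > 0 such that for all t ≥ T₀/4 and all x ∈ ℝⁿ with |x| ≤ φ(t) - φ(T₀/4), one has φ(t)² - |x|² ≥ δ·((φ(t) + M)² - |x|²). -/
import Mathlib


/-- The generalized distance function for the Tricomi operator. -/
noncomputable def phi (m : ℕ) (t : ℝ) : ℝ := (2 / ((m : ℝ) + 2)) * t ^ (((m : ℝ) + 2) / 2)

/-- Geometric inequality (3.7) with `ν_j = 0`: inside the shifted cusp cone
`|x| ≤ φ(t) - φ(T₀/4)`, `t ≥ T₀/4`, the weight `φ(t)² - |x|²` dominates a fixed multiple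
of `(φ(t)+M)² - |x|²`. -/
theorem stmt_6 (m n : ℕ) (hm : 1 ≤ m) (M T₀ : ℝ) (hM : 1 < M)
    (hT₀ : T₀ ∈ Set.Ioo (0 : ℝ) 1) :
    ∃ δ > 0, ∀ t : ℝ, T₀ / 4 ≤ t → ∀ x : EuclideanSpace ℝ (Fin n),
      ‖x‖ ≤ phi m t - phi m (T₀ / 4) →
      (phi m t) ^ 2 - ‖x‖ ^ 2 ≥ δ * ((phi m t + M) ^ 2 - ‖x‖ ^ 2) := by
  have hT : 0 < T₀ / 4 := by linarith [hT₀.1]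
  set a := phi m (T₀ / 4) with ha
  have ha0 : 0 < a := by
    rw [ha]; unfold phi
    have : (0:ℝ) < (m:ℝ) + 2 := by positivity
    positivity
  have hM0 : (0:ℝ) < M := by linarith
  have hMa : (0:ℝ) < a + M := by linarith
  refine ⟨(a / (a + M)) ^ 2, by positivity, ?_⟩
  intro t ht x hx
  set p := phi m t with hp
  set r := ‖x‖ with hr
  have hr0 : 0 ≤ r := norm_nonneg x
  have hpa : a ≤ p - r := by linarith
  rw [ge_iff_le, div_pow, div_mul_eq_mul_div, div_le_iff₀ (by positivity)]
  nlinarith [mul_nonneg (mul_nonneg ha0.le (show 0 ≤ p - r - a by linarith))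
      (show 0 ≤ p + r by linarith),
    mul_nonneg (mul_nonneg ha0.le (show 0 ≤ p + r - a by linarith))
      (show 0 ≤ p - r by linarith),
    mul_nonneg hM0.le (mul_nonneg (show 0 ≤ p - r - a by linarith)
      (show 0 ≤ p + r - a by linarith)),
    mul_nonneg hM0.le (mul_nonneg ha0.le (show 0 ≤ p - r - a by linarith)),
    mul_nonneg hM0.le (mul_nonneg ha0.le (show 0 ≤ p + r - a by linarith))]
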